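/- arXiv:1304.1070 — 4 statements merged into one kernel-verified Lean document; each statement's English description precedes it below -/
import Mathlib

section
/- For all integers r, s ≥ 0, the composition of a left differential operator of order ≤ r with a left differential operator of order ≤ s is a left differential operator of order ≤ r+s; that is, if D₁ ∈ 𝒟_r(A) and D₂ ∈ 𝒟_s(A) then D₁∘D₂ ∈ 𝒟_{r+s}(A). In other words, the filtration of 𝒟(A) = ⋃_n 𝒟_n(A) by the 𝒟_n(A) is multiplicative. -/
/-- The recursively defined k-submodules of left differential operators on a
not necessarily commutative k-algebra A:
`Dnc k A n` is the k-submodule of `End_k(A)` spanned by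
`{l_a ∘ φ ∘ l_b : a b : A, φ ∈ 𝒟'_n(A)}`, where
`𝒟'_n(A) = {φ : l_t ∘ φ - φ ∘ l_t ∈ 𝒟_{n-1}(A) for all t}` and `𝒟_{-1}(A) = 0`. -/
noncomputable def Dnc (k : Type*) (A : Type*) [CommRing k] [Ring A] [Algebra k A] :
    ℕ → Submodule k (Module.End k A)
  | 0 => Submodule.span k {ψ | ∃ (a b : A) (φ : Module.End k A),
      (∀ t : A, LinearMap.mulLeft k t * φ - φ * LinearMap.mulLeft k t = 0) ∧
      ψ = LinearMap.mulLeft k a * φ * LinearMap.mulLeft k b}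
  | (n + 1) => Submodule.span k {ψ | ∃ (a b : A) (φ : Module.End k A),
      (∀ t : A, LinearMap.mulLeft k t * φ - φ * LinearMap.mulLeft k t ∈ Dnc k A n) ∧
      ψ = LinearMap.mulLeft k a * φ * LinearMap.mulLeft k b}

/-!
Since `[l_t, φψ] = [l_t, φ]ψ + φ[l_t, ψ]`, the product of an element of `𝒟'_r` and one of `𝒟'_s`
lies in `𝒟'_{r+s}` as soon as `𝒟_{r-1} 𝒟_s` and `𝒟_r 𝒟_{s-1}` are known to lie in `𝒟_{r+s-1}`.
For the generators of `𝒟_r` and `𝒟_s`,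
`(l_a φ l_b)(l_c ψ l_d) = l_a (φψ) l_{bcd} + l_a (φ [l_{bc}, ψ]) l_d`, and the second term is
handled by the same hypothesis. So the claim follows by strong induction on `r + s`.
-/

namespace Dnc

variable {k A : Type*} [CommRing k] [Ring A] [Algebra k A]

local notation "L" => LinearMap.mulLeft k

variable (k A) in
/-- `𝒟_{n-1}(A)`, where `𝒟_{-1}(A) = 0`. -/
noncomputable def prev : ℕ → Submodule k (Module.End k A)
  | 0 => ⊥
  | n + 1 => Dnc k A n

variable (k A) in
/-- `𝒟'_n(A)`. -/
def prime (n : ℕ) : Set (Module.End k A) :=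
  {φ | ∀ t : A, L t * φ - φ * L t ∈ prev k A n}

theorem eq_span (n : ℕ) :
    Dnc k A n = Submodule.span k {ψ | ∃ (a b : A), ∃ φ ∈ prime k A n, ψ = L a * φ * L b} := by
  cases n <;> rfl

theorem mulLeft_mul_mulLeft_mem_of_mem_prime {n : ℕ} (a b : A) {φ : Module.End k A}
    (hφ : φ ∈ prime k A n) :
    L a * φ * L b ∈ Dnc k A n := by
  rw [eq_span]
  exact Submodule.subset_span ⟨a, b, φ, hφ, rfl⟩

theorem prime_subset (n : ℕ) : prime k A n ⊆ Dnc k A n := by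
  intro φ hφ
  simpa [← Module.End.one_eq_id] using mulLeft_mul_mulLeft_mem_of_mem_prime (1 : A) 1 hφ

theorem mono_of_prev_le {m n : ℕ} (h : prev k A m ≤ prev k A n) : Dnc k A m ≤ Dnc k A n := by
  rw [eq_span, eq_span]
  exact Submodule.span_mono fun _ ⟨a, b, φ, hφ, hψ⟩ ↦ ⟨a, b, φ, fun t ↦ h (hφ t), hψ⟩

theorem monotone : Monotone (Dnc k A) := by
  refine monotone_nat_of_le_succ fun n ↦ ?_
  induction n with
  | zero => exact mono_of_prev_le bot_le
  | succ n ih => exact mono_of_prev_le ih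

theorem prev_le (n : ℕ) : prev k A n ≤ Dnc k A n := by
  cases n with
  | zero => exact bot_le
  | succ n => exact monotone n.le_succ

theorem mulLeft_mul_mulLeft_mem {n : ℕ} (a b : A) {X : Module.End k A} (hX : X ∈ Dnc k A n) :
    L a * X * L b ∈ Dnc k A n := by
  rw [eq_span] at hX
  induction hX using Submodule.span_induction with
  | mem _ hY =>
    obtain ⟨c, d, φ, hφ, rfl⟩ := hY
    have hassoc : L a * (L c * φ * L d) * L b = L (a * c) * φ * L (d * b) := by
      simp only [LinearMap.mulLeft_mul, ← Module.End.mul_eq_comp, mul_assoc]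
    rw [hassoc]
    exact mulLeft_mul_mulLeft_mem_of_mem_prime _ _ hφ
  | zero => simp
  | add X Y _ _ hX hY => simpa only [mul_add, add_mul] using add_mem hX hY
  | smul c X _ hX => simpa only [mul_smul_comm, smul_mul_assoc] using Submodule.smul_mem _ c hX

section Induction

variable {r s : ℕ} (hl : prev k A r * Dnc k A s ≤ prev k A (r + s))
  (hr : Dnc k A r * prev k A s ≤ prev k A (r + s))
include hl hr

theorem prime_mul_mem {φ ψ : Module.End k A} (hφ : φ ∈ prime k A r) (hψ : ψ ∈ prime k A s) :
    φ * ψ ∈ prime k A (r + s) := by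
  intro t
  have leibniz : L t * (φ * ψ) - φ * ψ * L t =
      (L t * φ - φ * L t) * ψ + φ * (L t * ψ - ψ * L t) := by
    simp only [mul_sub, sub_mul, mul_assoc]
    abel
  rw [leibniz]
  exact add_mem (hl (Submodule.mul_mem_mul (hφ t) (prime_subset s hψ)))
    (hr (Submodule.mul_mem_mul (prime_subset r hφ) (hψ t)))

theorem mul_le_of_prev : Dnc k A r * Dnc k A s ≤ Dnc k A (r + s) := by
  rw [eq_span r, eq_span s, Submodule.span_mul_span, Submodule.span_le]
  rintro _ ⟨_, ⟨a, b, φ, hφ, rfl⟩, _, ⟨c, d, ψ, hψ, rfl⟩, rfl⟩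
  dsimp only
  have expand : L a * φ * L b * (L c * ψ * L d) =
      L a * (φ * ψ) * L (b * c * d) + L a * (φ * (L (b * c) * ψ - ψ * L (b * c))) * L d := by
    simp only [LinearMap.mulLeft_mul, ← Module.End.mul_eq_comp, mul_sub, sub_mul, mul_assoc]
    abel
  rw [expand]
  exact add_mem (mulLeft_mul_mulLeft_mem_of_mem_prime _ _ (prime_mul_mem hl hr hφ hψ))
    (mulLeft_mul_mulLeft_mem _ _
      (prev_le _ (hr (Submodule.mul_mem_mul (prime_subset r hφ) (hψ _)))))

end Induction

theorem mul_le (r s : ℕ) : Dnc k A r * Dnc k A s ≤ Dnc k A (r + s) := by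
  induction hn : r + s using Nat.strong_induction_on generalizing r s with
  | _ n ih =>
  subst hn
  apply mul_le_of_prev
  · cases r with
    | zero => simp [prev]
    | succ r =>
      rw [Nat.add_right_comm]
      exact ih (r + s) (by omega) r s rfl
  · cases s with
    | zero => simp [prev]
    | succ s => exact ih (r + s) (by omega) r s rfl

end Dnc

/-- The filtration by the `𝒟_n(A)` is multiplicative:
`𝒟_r(A) ∘ 𝒟_s(A) ⊆ 𝒟_{r+s}(A)`. -/
theorem Dnc_mul_mem (k : Type*) (A : Type*) [CommRing k] [Ring A] [Algebra k A]
    (r s : ℕ) (D₁ D₂ : Module.End k A)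
    (h₁ : D₁ ∈ Dnc k A r) (h₂ : D₂ ∈ Dnc k A s) :
    D₁ * D₂ ∈ Dnc k A (r + s) :=
  Dnc.mul_le r s (Submodule.mul_mem_mul h₁ h₂)
end

section
/- For every n ≥ 0 and every a ∈ A, if D ∈ 𝒟'_n(A) then r_a ∘ D ∈ 𝒟_n(A). -/
/-- `𝒟'_n(A) = {φ ∈ End_k(A) : l_t ∘ φ - φ ∘ l_t ∈ 𝒟_{n-1}(A) for all t ∈ A}`,
with `𝒟_{-1}(A) = 0`. -/
noncomputable def Dnc' (k : Type*) (A : Type*) [CommRing k] [Ring A] [Algebra k A] :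
    ℕ → Set (Module.End k A)
  | 0 => {φ | ∀ t : A, LinearMap.mulLeft k t * φ - φ * LinearMap.mulLeft k t = 0}
  | (n + 1) => {φ | ∀ t : A, LinearMap.mulLeft k t * φ - φ * LinearMap.mulLeft k t ∈ Dnc k A n}


section Aux
variable (k : Type*) (A : Type*) [CommRing k] [Ring A] [Algebra k A]

lemma comm_lr (t a : A) :
    LinearMap.mulLeft k t * LinearMap.mulRight k a
      = LinearMap.mulRight k a * LinearMap.mulLeft k t :=
  (LinearMap.commute_mulLeft_right t a).eq

lemma swap_eq (a : A) (D : Module.End k A) (t : A) :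
    LinearMap.mulLeft k t * (LinearMap.mulRight k a * D)
      - LinearMap.mulRight k a * D * LinearMap.mulLeft k t
      = LinearMap.mulRight k a * (LinearMap.mulLeft k t * D - D * LinearMap.mulLeft k t) := by
  rw [mul_sub, ← mul_assoc, comm_lr, mul_assoc, mul_assoc]

lemma mem_Dnc_of_mem_Dnc' (n : ℕ) (D : Module.End k A) (hD : D ∈ Dnc' k A n) :
    D ∈ Dnc k A n := by
  cases n with
  | zero =>
    rw [Dnc]
    exact Submodule.subset_span ⟨1, 1, D, hD, by ext x; simp⟩
  | succ n =>
    rw [Dnc]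
    exact Submodule.subset_span ⟨1, 1, D, hD, by ext x; simp⟩

lemma key (n : ℕ) :
    (∀ (a : A) (D : Module.End k A), D ∈ Dnc' k A n →
        LinearMap.mulRight k a * D ∈ Dnc' k A n) ∧
    (∀ (a : A) (ψ : Module.End k A), ψ ∈ Dnc k A n →
        LinearMap.mulRight k a * ψ ∈ Dnc k A n) := by
  induction n with
  | zero =>
    have h1 : ∀ (a : A) (D : Module.End k A), D ∈ Dnc' k A 0 →
        LinearMap.mulRight k a * D ∈ Dnc' k A 0 := by
      intro a D hD t
      rw [swap_eq, hD t, mul_zero]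
    refine ⟨h1, ?_⟩
    intro a ψ hψ
    rw [Dnc] at hψ ⊢
    refine Submodule.span_induction ?_ ?_ ?_ ?_ hψ
    · rintro x ⟨b, c, φ, hφ, rfl⟩
      refine Submodule.subset_span ⟨b, c, LinearMap.mulRight k a * φ, h1 a φ hφ, ?_⟩
      ext x; simp [Module.End.mul_apply, mul_assoc]
    · simp
    · intro x y _ _ hx hy; rw [mul_add]; exact add_mem hx hy
    · intro c x _ hx; rw [mul_smul_comm]; exact Submodule.smul_mem _ _ hx
  | succ n ih =>
    have h1 : ∀ (a : A) (D : Module.End k A), D ∈ Dnc' k A (n+1) →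
        LinearMap.mulRight k a * D ∈ Dnc' k A (n+1) := by
      intro a D hD t
      rw [swap_eq]
      exact ih.2 a _ (hD t)
    refine ⟨h1, ?_⟩
    intro a ψ hψ
    rw [Dnc] at hψ ⊢
    refine Submodule.span_induction ?_ ?_ ?_ ?_ hψ
    · rintro x ⟨b, c, φ, hφ, rfl⟩
      refine Submodule.subset_span ⟨b, c, LinearMap.mulRight k a * φ, h1 a φ hφ, ?_⟩
      ext x; simp [Module.End.mul_apply, mul_assoc]
    · simp
    · intro x y _ _ hx hy; rw [mul_add]; exact add_mem hx hy
    · intro c x _ hx; rw [mul_smul_comm]; exact Submodule.smul_mem _ _ hx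

end Aux

/-- For every n ≥ 0 and a ∈ A, if `D ∈ 𝒟'_n(A)` then `r_a ∘ D ∈ 𝒟_n(A)`. -/
theorem rightMul_comp_mem_Dnc (k : Type*) (A : Type*) [CommRing k] [Ring A] [Algebra k A]
    (n : ℕ) (a : A) (D : Module.End k A) (hD : D ∈ Dnc' k A n) :
    LinearMap.mulRight k a * D ∈ Dnc k A n :=
  mem_Dnc_of_mem_Dnc' k A n _ ((key k A n).1 a D hD)
end

section
/- For all r, s ≥ 0 and every a ∈ A, if D₁ ∈ 𝒟'_r(A) and D₂ ∈ 𝒟'_s(A), then D₁ ∘ l_a ∘ D₂ ∈ 𝒟_{r+s}(A). -/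
/-
Induct on `r + s`. By the Leibniz rule `[l_t, D₁ D₂] = [l_t, D₁] D₂ + D₁ [l_t, D₂]`, the
induction hypothesis (extended by linearity from the generators `l_c φ l_d` to all of `𝒟`) gives
`D₁ D₂ ∈ 𝒟'_{r+s}`. Then `D₁ l_a D₂ = l_a (D₁ D₂) + [D₁, l_a] D₂`, where `[D₁, l_a] ∈ 𝒟_{r-1}`,
so the second term lies in `𝒟_{r-1+s} ⊆ 𝒟_{r+s}`, again by the induction hypothesis.
-/

section

open LinearMap

variable {k A : Type*} [CommRing k] [Ring A] [Algebra k A]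

theorem Dnc_eq_span (n : ℕ) : Dnc k A n = Submodule.span k
    {ψ | ∃ (a b : A) (φ : Module.End k A), φ ∈ Dnc' k A n ∧ ψ = mulLeft k a * φ * mulLeft k b} := by
  cases n <;> rfl

theorem mulLeft_mul_mul_mulLeft_mem_Dnc {n : ℕ} {φ : Module.End k A} (hφ : φ ∈ Dnc' k A n)
    (a b : A) : mulLeft k a * φ * mulLeft k b ∈ Dnc k A n := by
  rw [Dnc_eq_span]
  exact Submodule.subset_span ⟨a, b, φ, hφ, rfl⟩

theorem Dnc_le_comap {m n : ℕ} (f : Module.End k A →ₗ[k] Module.End k A)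
    (hf : ∀ (a b : A) (φ : Module.End k A), φ ∈ Dnc' k A m →
      f (mulLeft k a * φ * mulLeft k b) ∈ Dnc k A n) :
    Dnc k A m ≤ (Dnc k A n).comap f := by
  rw [Dnc_eq_span, Submodule.span_le]
  rintro _ ⟨a, b, φ, hφ, rfl⟩
  exact hf a b φ hφ

theorem mulLeft_mul_mem_Dnc {n : ℕ} (a : A) {E : Module.End k A} (hE : E ∈ Dnc k A n) :
    mulLeft k a * E ∈ Dnc k A n :=
  Dnc_le_comap (mulLeft k (mulLeft k a)) (fun c d φ hφ => by
    simpa only [mulLeft_apply, mulLeft_mul, Module.End.mul_eq_comp, comp_assoc] using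
      mulLeft_mul_mul_mulLeft_mem_Dnc hφ (a * c) d) hE

theorem mul_mulLeft_mem_Dnc {n : ℕ} (b : A) {E : Module.End k A} (hE : E ∈ Dnc k A n) :
    E * mulLeft k b ∈ Dnc k A n :=
  Dnc_le_comap (mulRight k (mulLeft k b)) (fun c d φ hφ => by
    simpa only [mulRight_apply, mulLeft_mul, Module.End.mul_eq_comp, comp_assoc] using
      mulLeft_mul_mul_mulLeft_mem_Dnc hφ c (d * b)) hE

theorem Dnc_le_Dnc_of_Dnc'_subset {m n : ℕ} (h : Dnc' k A m ⊆ Dnc' k A n) :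
    Dnc k A m ≤ Dnc k A n := by
  rw [Dnc_eq_span, Dnc_eq_span]
  exact Submodule.span_mono fun ψ ⟨a, b, φ, hφ, hψ⟩ => ⟨a, b, φ, h hφ, hψ⟩

theorem Dnc'_subset_Dnc'_succ (n : ℕ) : Dnc' k A n ⊆ Dnc' k A (n + 1) := by
  induction n with
  | zero =>
    intro φ hφ t
    rw [show mulLeft k t * φ - φ * mulLeft k t = 0 from hφ t]
    exact zero_mem _
  | succ n ih => exact fun φ hφ t => Dnc_le_Dnc_of_Dnc'_subset ih (hφ t)

theorem Dnc_mono : Monotone (Dnc k A) :=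
  monotone_nat_of_le_succ fun n => Dnc_le_Dnc_of_Dnc'_subset (Dnc'_subset_Dnc'_succ n)

variable (k A) in
/-- `𝒟_{n-1}(A)`, with `𝒟_{-1}(A) = 0`. -/
noncomputable def DncPrev : ℕ → Submodule k (Module.End k A)
  | 0 => ⊥
  | n + 1 => Dnc k A n

theorem mem_Dnc'_iff {n : ℕ} {φ : Module.End k A} :
    φ ∈ Dnc' k A n ↔ ∀ t : A, mulLeft k t * φ - φ * mulLeft k t ∈ DncPrev k A n := by
  cases n <;> simp [Dnc', DncPrev]

theorem DncPrev_le_Dnc (n : ℕ) : DncPrev k A n ≤ Dnc k A n := by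
  cases n with
  | zero => exact bot_le
  | succ n => exact Dnc_mono n.le_succ

variable (k A) in
def CompMulLeftCompMem (r s : ℕ) : Prop :=
  ∀ (a : A) (D₁ D₂ : Module.End k A), D₁ ∈ Dnc' k A r → D₂ ∈ Dnc' k A s →
    D₁ * mulLeft k a * D₂ ∈ Dnc k A (r + s)

namespace CompMulLeftCompMem

variable {r s : ℕ}

theorem Dnc_mul_Dnc'_mem (H : CompMulLeftCompMem k A r s) {E D : Module.End k A}
    (hE : E ∈ Dnc k A r) (hD : D ∈ Dnc' k A s) : E * D ∈ Dnc k A (r + s) :=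
  Dnc_le_comap (mulRight k D) (fun c d φ hφ => by
    simpa only [mulRight_apply, mul_assoc] using mulLeft_mul_mem_Dnc c (H d φ D hφ hD)) hE

theorem Dnc'_mul_Dnc_mem (H : CompMulLeftCompMem k A r s) {D E : Module.End k A}
    (hD : D ∈ Dnc' k A r) (hE : E ∈ Dnc k A s) : D * E ∈ Dnc k A (r + s) :=
  Dnc_le_comap (mulLeft k D) (fun c d φ hφ => by
    simpa only [mulLeft_apply, mul_assoc] using mul_mulLeft_mem_Dnc d (H c D φ hD hφ)) hE

end CompMulLeftCompMem

theorem DncPrev_mul_Dnc'_mem {r s : ℕ} (H : ∀ r' < r, CompMulLeftCompMem k A r' s)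
    {E D : Module.End k A} (hE : E ∈ DncPrev k A r) (hD : D ∈ Dnc' k A s) :
    E * D ∈ DncPrev k A (r + s) := by
  cases r with
  | zero =>
    rw [(Submodule.mem_bot k).1 hE, zero_mul]
    exact zero_mem _
  | succ r =>
    rw [Nat.succ_add]
    exact (H r r.lt_succ_self).Dnc_mul_Dnc'_mem hE hD

theorem Dnc'_mul_DncPrev_mem {r s : ℕ} (H : ∀ s' < s, CompMulLeftCompMem k A r s')
    {D E : Module.End k A} (hD : D ∈ Dnc' k A r) (hE : E ∈ DncPrev k A s) :
    D * E ∈ DncPrev k A (r + s) := by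
  cases s with
  | zero =>
    rw [(Submodule.mem_bot k).1 hE, mul_zero]
    exact zero_mem _
  | succ s => exact (H s s.lt_succ_self).Dnc'_mul_Dnc_mem hD hE

theorem mul_mem_Dnc'_add {r s : ℕ} (H₁ : ∀ r' < r, CompMulLeftCompMem k A r' s)
    (H₂ : ∀ s' < s, CompMulLeftCompMem k A r s') {D₁ D₂ : Module.End k A}
    (h₁ : D₁ ∈ Dnc' k A r) (h₂ : D₂ ∈ Dnc' k A s) : D₁ * D₂ ∈ Dnc' k A (r + s) := by
  refine mem_Dnc'_iff.2 fun t => ?_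
  have leibniz : mulLeft k t * (D₁ * D₂) - D₁ * D₂ * mulLeft k t =
      (mulLeft k t * D₁ - D₁ * mulLeft k t) * D₂ + D₁ * (mulLeft k t * D₂ - D₂ * mulLeft k t) := by
    simp only [mul_sub, sub_mul, mul_assoc]
    abel
  rw [leibniz]
  exact add_mem (DncPrev_mul_Dnc'_mem H₁ (mem_Dnc'_iff.1 h₁ t) h₂)
    (Dnc'_mul_DncPrev_mem H₂ h₁ (mem_Dnc'_iff.1 h₂ t))

theorem compMulLeftCompMem_of_lt {r s : ℕ}
    (ih : ∀ r' s', r' + s' < r + s → CompMulLeftCompMem k A r' s') :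
    CompMulLeftCompMem k A r s := by
  intro a D₁ D₂ h₁ h₂
  have hprod : D₁ * D₂ ∈ Dnc' k A (r + s) :=
    mul_mem_Dnc'_add (fun r' hr => ih r' s (by omega)) (fun s' hs => ih r s' (by omega)) h₁ h₂
  have hcomm : (D₁ * mulLeft k a - mulLeft k a * D₁) * D₂ ∈ DncPrev k A (r + s) := by
    simpa only [neg_sub] using DncPrev_mul_Dnc'_mem (fun r' hr => ih r' s (by omega))
      (neg_mem (mem_Dnc'_iff.1 h₁ a)) h₂
  have key : D₁ * mulLeft k a * D₂ =
      mulLeft k a * (D₁ * D₂) * mulLeft k 1 + (D₁ * mulLeft k a - mulLeft k a * D₁) * D₂ := by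
    rw [mulLeft_one, ← Module.End.one_eq_id]
    simp only [mul_one, sub_mul, mul_assoc]
    abel
  rw [key]
  exact add_mem (mulLeft_mul_mul_mulLeft_mem_Dnc hprod a 1) (DncPrev_le_Dnc _ hcomm)

end

/-- If `D₁ ∈ 𝒟'_r(A)` and `D₂ ∈ 𝒟'_s(A)` then `D₁ ∘ l_a ∘ D₂ ∈ 𝒟_{r+s}(A)`. -/
theorem Dnc'_comp_mulLeft_comp_Dnc' (k : Type*) (A : Type*) [CommRing k] [Ring A] [Algebra k A]
    (r s : ℕ) (a : A) (D₁ D₂ : Module.End k A)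
    (h₁ : D₁ ∈ Dnc' k A r) (h₂ : D₂ ∈ Dnc' k A s) :
    D₁ * LinearMap.mulLeft k a * D₂ ∈ Dnc k A (r + s) := by
  induction hN : r + s using Nat.strong_induction_on generalizing r s a D₁ D₂ with
  | _ N ih =>
    subst hN
    exact compMulLeftCompMem_of_lt
      (fun r' s' hlt a D₁ D₂ h₁ h₂ => ih _ hlt r' s' a D₁ D₂ h₁ h₂ rfl) a D₁ D₂ h₁ h₂
end

section
/- Let (∂_0 = id, ∂_1, ∂_2, …) be a Hasse–Schmidt derivation on A, i.e. a sequence of k-module endomorphisms of A with ∂_0 the identity and ∂_n(xy) = Σ_{i=0}^{n} ∂_i(x)∂_{n−i}(y) for all x, y ∈ A and n ≥ 0. Then for every n ≥ 0 the component ∂_n belongs to 𝒟'_n(A), and hence ∂_n is a left differential operator of order ≤ n on A, i.e. ∂_n ∈ 𝒟_n(A). -/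
section Aux

variable (k : Type*) (A : Type*) [CommRing k] [Ring A] [Algebra k A]

lemma Dnc_mono_succ : ∀ n, Dnc k A n ≤ Dnc k A (n + 1) := by
  intro n
  induction n with
  | zero =>
    apply Submodule.span_mono
    rintro ψ ⟨a, b, φ, h, rfl⟩
    exact ⟨a, b, φ, fun t => by rw [h t]; exact zero_mem _, rfl⟩
  | succ n ih =>
    apply Submodule.span_mono
    rintro ψ ⟨a, b, φ, h, rfl⟩
    exact ⟨a, b, φ, fun t => ih (h t), rfl⟩

lemma Dnc_mono_s11 {m n : ℕ} (h : m ≤ n) : Dnc k A m ≤ Dnc k A n := by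
  induction n with
  | zero => rw [Nat.le_zero.mp h]
  | succ n ih =>
    rcases Nat.lt_or_ge m (n+1) with h1 | h1
    · exact le_trans (ih (by omega)) (Dnc_mono_succ k A n)
    · rw [le_antisymm h h1]

lemma Dnc_mulLeft_mem (n : ℕ) (a : A) {ψ : Module.End k A} (h : ψ ∈ Dnc k A n) :
    LinearMap.mulLeft k a * ψ ∈ Dnc k A n := by
  cases n with
  | zero =>
    refine Submodule.span_induction ?_ ?_ ?_ ?_ h
    · rintro ψ ⟨a', b, φ, hφ, rfl⟩
      refine Submodule.subset_span ⟨a * a', b, φ, hφ, ?_⟩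
      rw [LinearMap.mulLeft_mul]
      rfl
    · simp
    · intro x y _ _ hx hy
      rw [mul_add]; exact add_mem hx hy
    · intro c x _ hx
      rw [mul_smul_comm]; exact Submodule.smul_mem _ _ hx
  | succ n =>
    refine Submodule.span_induction ?_ ?_ ?_ ?_ h
    · rintro ψ ⟨a', b, φ, hφ, rfl⟩
      refine Submodule.subset_span ⟨a * a', b, φ, hφ, ?_⟩
      rw [LinearMap.mulLeft_mul]
      rfl
    · simp
    · intro x y _ _ hx hy
      rw [mul_add]; exact add_mem hx hy
    · intro c x _ hx
      rw [mul_smul_comm]; exact Submodule.smul_mem _ _ hx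

lemma Dnc'_subset (n : ℕ) : Dnc' k A n ⊆ (Dnc k A n : Set (Module.End k A)) := by
  intro φ hφ
  have hφ1 : φ = LinearMap.mulLeft k (1 : A) * φ * LinearMap.mulLeft k (1 : A) := by
    rw [LinearMap.mulLeft_one]
    ext x; simp
  cases n with
  | zero => exact Submodule.subset_span ⟨1, 1, φ, hφ, hφ1⟩
  | succ n => exact Submodule.subset_span ⟨1, 1, φ, hφ, hφ1⟩

lemma comm_formula (hs : ℕ → Module.End k A) (h0 : hs 0 = 1)
    (hmul : ∀ (n : ℕ) (x y : A),
      hs n (x * y) = ∑ i ∈ Finset.range (n + 1), hs i x * hs (n - i) y)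
    (n : ℕ) (t : A) :
    LinearMap.mulLeft k t * hs n - hs n * LinearMap.mulLeft k t
      = - ∑ i ∈ Finset.range n, LinearMap.mulLeft k (hs (i + 1) t) * hs (n - (i + 1)) := by
  ext x
  simp only [LinearMap.sub_apply, Module.End.mul_apply, LinearMap.mulLeft_apply,
    LinearMap.neg_apply, LinearMap.coe_sum, Finset.sum_apply]
  rw [hmul n t x, Finset.sum_range_succ']
  simp [h0]

end Aux

/-- Each component `∂_n` of a Hasse–Schmidt derivation on A belongs to `𝒟'_n(A)`,
and hence is a left differential operator of order ≤ n, i.e. `∂_n ∈ 𝒟_n(A)`. -/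
theorem hasseSchmidt_mem_Dnc (k : Type*) (A : Type*) [CommRing k] [Ring A] [Algebra k A]
    (hs : ℕ → Module.End k A) (h0 : hs 0 = 1)
    (hmul : ∀ (n : ℕ) (x y : A),
      hs n (x * y) = ∑ i ∈ Finset.range (n + 1), hs i x * hs (n - i) y) :
    ∀ n : ℕ, hs n ∈ Dnc' k A n ∧ hs n ∈ Dnc k A n := by
  intro n
  induction n using Nat.strong_induction_on with
  | _ n ih =>
    have hmem : hs n ∈ Dnc' k A n := by
      cases n with
      | zero =>
        intro t
        rw [h0, mul_one, one_mul, sub_self]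
      | succ n =>
        intro t
        rw [comm_formula k A hs h0 hmul]
        apply neg_mem
        apply Submodule.sum_mem
        intro i hi
        apply Dnc_mulLeft_mem
        have hni : n + 1 - (i + 1) = n - i := by omega
        rw [hni]
        exact Dnc_mono_s11 k A (by omega : n - i ≤ n) (ih (n - i) (by omega)).2
    exact ⟨hmem, Dnc'_subset k A n hmem⟩
end
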